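/- Fourth mixed pentagon relation: S''₁₂ · S̃₂₃ = S̃₂₃ · S''₁₃ · S''₁₂ as matrices on V × V × V, where S̃ := Sᵀ and S'' := (S^{t₂})⁻¹. -/
import Mathlib


open Matrix BigOperators

/-- Matrix on `V × V × V` acting as `T` on the first and second factors. -/
def lift12 {k V : Type*} [Semiring k] [DecidableEq V]
    (T : Matrix (V × V) (V × V) k) : Matrix (V × V × V) (V × V × V) k :=
  Matrix.of fun p q =>
    T (p.1, p.2.1) (q.1, q.2.1) * (if p.2.2 = q.2.2 then 1 else 0)

/-- Matrix on `V × V × V` acting as `T` on the first and third factors. -/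
def lift13 {k V : Type*} [Semiring k] [DecidableEq V]
    (T : Matrix (V × V) (V × V) k) : Matrix (V × V × V) (V × V × V) k :=
  Matrix.of fun p q =>
    T (p.1, p.2.2) (q.1, q.2.2) * (if p.2.1 = q.2.1 then 1 else 0)

/-- Matrix on `V × V × V` acting as `T` on the second and third factors. -/
def lift23 {k V : Type*} [Semiring k] [DecidableEq V]
    (T : Matrix (V × V) (V × V) k) : Matrix (V × V × V) (V × V × V) k :=
  Matrix.of fun p q =>
    T (p.2.1, p.2.2) (q.2.1, q.2.2) * (if p.1 = q.1 then 1 else 0)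

/-- Partial transposition in the first factor: `T^{t₁}_{(a,b),(c,d)} = T_{(c,b),(a,d)}`. -/
def pt1 {k V : Type*} (T : Matrix (V × V) (V × V) k) : Matrix (V × V) (V × V) k :=
  Matrix.of fun p q => T (q.1, p.2) (p.1, q.2)

/-- Partial transposition in the second factor: `T^{t₂}_{(a,b),(c,d)} = T_{(a,d),(c,b)}`. -/
def pt2 {k V : Type*} (T : Matrix (V × V) (V × V) k) : Matrix (V × V) (V × V) k :=
  Matrix.of fun p q => T (p.1, q.2) (q.1, p.2)

section Helpers

variable {k V : Type*} [Field k] [Fintype V] [DecidableEq V]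

lemma l1213_apply (A B : Matrix (V × V) (V × V) k) (p q : V × V × V) :
    (lift12 A * lift13 B) p q
      = ∑ x, A (p.1, p.2.1) (x, q.2.1) * B (x, p.2.2) (q.1, q.2.2) := by
  rw [Matrix.mul_apply, Fintype.sum_prod_type]
  simp [lift12, lift13, Fintype.sum_prod_type, mul_ite, ite_mul, mul_assoc]

lemma mul_lift23_apply (M : Matrix (V × V × V) (V × V × V) k)
    (C : Matrix (V × V) (V × V) k) (p q : V × V × V) :
    (M * lift23 C) p q = ∑ y, ∑ z, M p (q.1, y, z) * C (y, z) (q.2.1, q.2.2) := by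
  rw [Matrix.mul_apply, Fintype.sum_prod_type_right]
  simp [lift23, Fintype.sum_prod_type, mul_ite, ite_mul, mul_assoc, mul_comm]

lemma mul_lift13_apply (M : Matrix (V × V × V) (V × V × V) k)
    (B : Matrix (V × V) (V × V) k) (p q : V × V × V) :
    (M * lift13 B) p q = ∑ x, ∑ z, M p (x, q.2.1, z) * B (x, z) (q.1, q.2.2) := by
  rw [Matrix.mul_apply, Fintype.sum_prod_type]
  simp [lift13, Fintype.sum_prod_type_right, mul_ite, ite_mul]

lemma lift23_mul_lift12_apply (C A : Matrix (V × V) (V × V) k) (p q : V × V × V) :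
    (lift23 C * lift12 A) p q
      = ∑ m, C (p.2.1, p.2.2) (m, q.2.2) * A (p.1, m) (q.1, q.2.1) := by
  rw [Matrix.mul_apply, Fintype.sum_prod_type_right]
  simp [lift23, lift12, Fintype.sum_prod_type, mul_ite, ite_mul]

lemma lift12_mul_lift23_apply (A C : Matrix (V × V) (V × V) k) (p q : V × V × V) :
    (lift12 A * lift23 C) p q
      = ∑ m, A (p.1, p.2.1) (q.1, m) * C (m, p.2.2) (q.2.1, q.2.2) := by
  rw [Matrix.mul_apply, Fintype.sum_prod_type_right]
  simp [lift23, lift12, Fintype.sum_prod_type, mul_ite, ite_mul]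

lemma lift12_mul (A B : Matrix (V × V) (V × V) k) :
    lift12 (A * B) = lift12 A * lift12 B := by
  ext ⟨a, b, c⟩ ⟨d, e, f⟩
  simp [lift12, Matrix.mul_apply, Fintype.sum_prod_type, mul_ite, ite_mul,
    Finset.sum_mul, mul_assoc]

lemma lift13_mul (A B : Matrix (V × V) (V × V) k) :
    lift13 (A * B) = lift13 A * lift13 B := by
  ext ⟨a, b, c⟩ ⟨d, e, f⟩
  simp [lift13, Matrix.mul_apply, Fintype.sum_prod_type_right, Fintype.sum_prod_type,
    mul_ite, ite_mul, Finset.sum_mul, mul_assoc]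

omit [Fintype V] in
lemma lift12_one : lift12 (1 : Matrix (V × V) (V × V) k) = 1 := by
  ext ⟨a, b, c⟩ ⟨d, e, f⟩
  simp [lift12, Matrix.one_apply, Prod.ext_iff]
  split_ifs <;> simp_all

omit [Fintype V] in
lemma lift13_one : lift13 (1 : Matrix (V × V) (V × V) k) = 1 := by
  ext ⟨a, b, c⟩ ⟨d, e, f⟩
  simp [lift13, Matrix.one_apply, Prod.ext_iff]
  split_ifs <;> simp_all

omit [DecidableEq V] in
lemma sum3_rev (f : V → V → V → k) :
    ∑ x, ∑ z, ∑ m, f x z m = ∑ m, ∑ z, ∑ x, f x z m :=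
  calc ∑ x, ∑ z, ∑ m, f x z m = ∑ z, ∑ x, ∑ m, f x z m := Finset.sum_comm
    _ = ∑ z, ∑ m, ∑ x, f x z m := Finset.sum_congr rfl fun _ _ => Finset.sum_comm
    _ = ∑ m, ∑ z, ∑ x, f x z m := Finset.sum_comm

end Helpers

theorem mixed_pentagon_four
    {k V : Type*} [Field k] [Fintype V] [DecidableEq V]
    (S : Matrix (V × V) (V × V) k)
    (hSinv : IsUnit S) (hSt2inv : IsUnit (pt2 S))
    (hpent : lift12 S * lift13 S * lift23 S = lift23 S * lift12 S) :
    lift12 (pt2 S)⁻¹ * lift23 Sᵀ = lift23 Sᵀ * lift13 (pt2 S)⁻¹ * lift12 (pt2 S)⁻¹ := by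
  -- abbreviations
  set Z := pt2 S with hZ
  have hdet : IsUnit Z.det := (Matrix.isUnit_iff_isUnit_det _).mp hSt2inv
  have hZZi : Z * Z⁻¹ = 1 := Matrix.mul_nonsing_inv _ hdet
  have hZiZ : Z⁻¹ * Z = 1 := Matrix.nonsing_inv_mul _ hdet
  -- the partially transposed pentagon relation
  have hB : lift23 Sᵀ * lift12 Z * lift13 Z = lift12 Z * lift23 Sᵀ := by
    ext ⟨a, b, c⟩ ⟨d, e, f⟩
    rw [mul_lift13_apply, lift12_mul_lift23_apply]
    simp only [lift23_mul_lift12_apply]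
    have hp := congrFun (congrFun hpent (a, e, f)) (d, b, c)
    rw [mul_lift23_apply, lift23_mul_lift12_apply] at hp
    simp only [l1213_apply] at hp
    calc
      ∑ x, ∑ z, (∑ m, Sᵀ ((a, b, c).2.1, (a, b, c).2.2) (m, z) * Z ((a, b, c).1, m) (x, (d, e, f).2.1)) *
          Z (x, z) ((d, e, f).1, (d, e, f).2.2)
        = ∑ x, ∑ z, ∑ m, S (a, e) (x, m) * S (x, f) (d, z) * S (m, z) (b, c) := by
          refine Finset.sum_congr rfl fun x _ => ?_
          refine Finset.sum_congr rfl fun z _ => ?_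
          rw [Finset.sum_mul]
          refine Finset.sum_congr rfl fun m _ => ?_
          simp only [hZ, pt2, Matrix.of_apply, Matrix.transpose_apply]
          ring
      _ = ∑ m, ∑ z, ∑ x, S (a, e) (x, m) * S (x, f) (d, z) * S (m, z) (b, c) :=
          sum3_rev _
      _ = ∑ y, ∑ z, (∑ x, S ((a, e, f).1, (a, e, f).2.1) (x, y) *
            S (x, (a, e, f).2.2) ((d, b, c).1, z)) * S (y, z) ((d, b, c).2.1, (d, b, c).2.2) := by
          refine Finset.sum_congr rfl fun m _ => ?_
          refine Finset.sum_congr rfl fun z _ => ?_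
          rw [Finset.sum_mul]
      _ = ∑ m, S ((a, e, f).2.1, (a, e, f).2.2) (m, (d, b, c).2.2) *
            S ((a, e, f).1, m) ((d, b, c).1, (d, b, c).2.1) := hp
      _ = ∑ m, Z ((a, b, c).1, (a, b, c).2.1) ((d, e, f).1, m) *
            Sᵀ (m, (a, b, c).2.2) ((d, e, f).2.1, (d, e, f).2.2) := by
          refine Finset.sum_congr rfl fun m _ => ?_
          simp only [hZ, pt2, Matrix.of_apply, Matrix.transpose_apply]
          ring
  -- lifted invertibility facts
  have h13 : lift13 Z * lift13 Z⁻¹ = 1 := by rw [← lift13_mul, hZZi, lift13_one]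
  have h12 : lift12 Z * lift12 Z⁻¹ = 1 := by rw [← lift12_mul, hZZi, lift12_one]
  have h12' : lift12 Z⁻¹ * lift12 Z = 1 := by rw [← lift12_mul, hZiZ, lift12_one]
  -- algebraic rearrangement
  have e1 : lift23 Sᵀ * lift12 Z = lift12 Z * lift23 Sᵀ * lift13 Z⁻¹ := by
    calc lift23 Sᵀ * lift12 Z
        = lift23 Sᵀ * lift12 Z * (lift13 Z * lift13 Z⁻¹) := by rw [h13, mul_one]
      _ = lift23 Sᵀ * lift12 Z * lift13 Z * lift13 Z⁻¹ := by rw [mul_assoc (lift23 Sᵀ * lift12 Z)]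
      _ = lift12 Z * lift23 Sᵀ * lift13 Z⁻¹ := by rw [hB]
  have e2 : lift23 Sᵀ = lift12 Z * lift23 Sᵀ * lift13 Z⁻¹ * lift12 Z⁻¹ := by
    calc lift23 Sᵀ = lift23 Sᵀ * (lift12 Z * lift12 Z⁻¹) := by rw [h12, mul_one]
      _ = lift23 Sᵀ * lift12 Z * lift12 Z⁻¹ := by rw [mul_assoc]
      _ = lift12 Z * lift23 Sᵀ * lift13 Z⁻¹ * lift12 Z⁻¹ := by rw [e1]
  conv_lhs => rw [e2]
  simp only [← mul_assoc]
  rw [h12', one_mul]
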